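/- arXiv:2509.18858 — 3 statements merged into one kernel-verified Lean document; each statement's English description precedes it below -/
import Mathlib

section
/- If the tensor product G × H of an r₁-regular graph G and an r₂-regular graph H has Laplacian perfect pair state transfer between (e_a − e_b) ⊗ e_w and (e_c − e_d) ⊗ e_z at time t, where e_a − e_b and e_c − e_d are Laplacian strongly cospectral in G, then for every eigenvalue θ_r in the Laplacian eigenvalue support of e_a − e_b in G, the graph H has perfect state transfer between w and z at time (θ_r − r₁)t. -/
open Matrix Complex Kronecker

/-- transition matrix `U_M(t) = exp(-itM)` -/
noncomputable def U {V : Type*} [Fintype V] [DecidableEq V] (M : Matrix V V ℂ) (t : ℝ) :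
    Matrix V V ℂ :=
  NormedSpace.exp ((-(Complex.I * (t : ℂ))) • M)

/-- standard basis vector -/
noncomputable def e {V : Type*} [DecidableEq V] (v : V) : V → ℂ := Pi.single v 1

/-- Kronecker product of vectors -/
def vecKron {α β : Type*} (u : α → ℂ) (v : β → ℂ) : α × β → ℂ := fun p => u p.1 * v p.2

/-!
For regular `G`, `A_G = ∑ᵣ (r₁ - θᵣ) Fᵣ`, so the Laplacian `r₁r₂ I - A_G ⊗ A_H` of `G × H` is
block diagonal along the spectral idempotents `Fᵣ ⊗ I`, and its transition matrix is
`∑ᵣ Fᵣ ⊗ e^{-i r₁ r₂ t} U_{A_H}((θᵣ - r₁) t)`. Applying `Fᵣ ⊗ I` to the transfer equation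
isolates one block. Strong cospectrality turns `Fᵣ (e_c - e_d)` into `± Fᵣ (e_a - e_b)`, which is
nonzero for `θᵣ` in the eigenvalue support, so the `H`-factors of the two sides agree up to a unit
scalar.
-/

theorem Matrix.sum_kronecker {ι l m n p α : Type*} [NonUnitalNonAssocSemiring α]
    (s : Finset ι) (A : ι → Matrix l m α) (B : Matrix n p α) :
    (∑ i ∈ s, A i) ⊗ₖ B = ∑ i ∈ s, A i ⊗ₖ B := by
  ext
  simp [sum_apply, Finset.sum_mul]

theorem Matrix.kronecker_mul_kronecker_of_orthogonalIdempotents {ι m n α : Type*}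
    [Fintype n] [DecidableEq n] [Fintype m] [DecidableEq ι] [CommSemiring α]
    {F : ι → Matrix n n α} (hF : OrthogonalIdempotents F) (B C : Matrix m m α) (i j : ι) :
    (F i ⊗ₖ B) * (F j ⊗ₖ C) = if i = j then F i ⊗ₖ (B * C) else 0 := by
  rw [← mul_kronecker_mul]
  split_ifs with h
  · rw [h, (hF.idem j).eq]
  · rw [hF.ortho h, zero_kronecker]

theorem Matrix.smul_one_sub_kronecker_eq_sum {ι n m α : Type*} [Fintype ι] [DecidableEq n]
    [DecidableEq m] [CommRing α] {F : ι → Matrix n n α} (hsum : ∑ i, F i = 1)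
    {A : Matrix n n α} {a : ι → α} (hA : A = ∑ i, a i • F i) (c : α) (B : Matrix m m α) :
    c • 1 - A ⊗ₖ B = ∑ i, F i ⊗ₖ (c • 1 - a i • B) := by
  have hsub (X Y : Matrix m m α) (i : ι) : F i ⊗ₖ (X - Y) = F i ⊗ₖ X - F i ⊗ₖ Y :=
    map_sub (kroneckerBilinear (R := α) (F i)) X Y
  simp_rw [hA, hsub, kronecker_smul, Finset.sum_sub_distrib, ← Finset.smul_sum,
    ← sum_kronecker, hsum, one_kronecker_one, sum_kronecker, smul_kronecker]

section vecKron

variable {α β α' β' : Type*}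

theorem kronecker_mulVec_vecKron [Fintype α'] [Fintype β'] (A : Matrix α α' ℂ)
    (B : Matrix β β' ℂ) (u : α' → ℂ) (v : β' → ℂ) :
    (A ⊗ₖ B) *ᵥ vecKron u v = vecKron (A *ᵥ u) (B *ᵥ v) := by
  funext ⟨p, q⟩
  simp only [mulVec, dotProduct, vecKron, kroneckerMap_apply, Fintype.sum_prod_type,
    Finset.sum_mul_sum]
  exact Finset.sum_congr rfl fun _ _ => Finset.sum_congr rfl fun _ _ => by ring

theorem smul_vecKron (s : ℂ) (u : α → ℂ) (v : β → ℂ) :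
    vecKron (s • u) v = s • vecKron u v := by
  funext p
  simp only [vecKron, Pi.smul_apply, smul_eq_mul, mul_assoc]

theorem vecKron_smul (s : ℂ) (u : α → ℂ) (v : β → ℂ) :
    vecKron u (s • v) = s • vecKron u v := by
  funext p
  simp only [vecKron, Pi.smul_apply, smul_eq_mul]
  ring

theorem vecKron_right_injective {u : α → ℂ} (hu : u ≠ 0) :
    Function.Injective (vecKron (β := β) u) := by
  intro x y hxy
  obtain ⟨p, hp⟩ := Function.ne_iff.mp hu
  funext q
  exact mul_left_cancel₀ hp (congrFun hxy (p, q))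

end vecKron

namespace CompleteOrthogonalIdempotents

variable {ι m n α : Type*} [Fintype ι] [DecidableEq m] [Fintype n] [DecidableEq n]

theorem sum_kronecker_one [CommRing α] {F : ι → Matrix n n α}
    (hF : CompleteOrthogonalIdempotents F) : ∑ i, F i ⊗ₖ (1 : Matrix m m α) = 1 := by
  rw [← sum_kronecker, hF.complete, one_kronecker_one]

variable [DecidableEq ι] [Fintype m]

theorem kronecker_one_mul_sum_kronecker [CommRing α] {F : ι → Matrix n n α}
    (hF : CompleteOrthogonalIdempotents F) (B : ι → Matrix m m α) (i : ι) :
    (F i ⊗ₖ 1) * ∑ j, F j ⊗ₖ B j = F i ⊗ₖ B i := by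
  simp_rw [Finset.mul_sum, kronecker_mul_kronecker_of_orthogonalIdempotents hF.1, one_mul,
    Finset.sum_ite_eq, Finset.mem_univ, if_true]

def kroneckerAlgHom [CommRing α] {F : ι → Matrix n n α} (hF : CompleteOrthogonalIdempotents F) :
    (ι → Matrix m m α) →ₐ[α] Matrix (n × m) (n × m) α where
  toFun C := ∑ i, F i ⊗ₖ C i
  map_one' := hF.sum_kronecker_one
  map_mul' C D := by
    simp_rw [Finset.sum_mul_sum, kronecker_mul_kronecker_of_orthogonalIdempotents hF.1,
      Finset.sum_ite_eq, Finset.mem_univ, if_true, Pi.mul_apply]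
  map_zero' := by simp
  map_add' C D := by simp [kronecker_add, Finset.sum_add_distrib]
  commutes' r := by
    simp_rw [Pi.algebraMap_apply, Algebra.algebraMap_eq_smul_one, kronecker_smul,
      ← Finset.smul_sum, hF.sum_kronecker_one]

open scoped Matrix.Norms.Operator in
theorem exp_sum_kronecker {𝕜 : Type*} [RCLike 𝕜] {F : ι → Matrix n n 𝕜}
    (hF : CompleteOrthogonalIdempotents F) (B : ι → Matrix m m 𝕜) :
    NormedSpace.exp (∑ i, F i ⊗ₖ B i) = ∑ i, F i ⊗ₖ NormedSpace.exp (B i) := by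
  have hcont : Continuous (hF.kroneckerAlgHom (m := m)) :=
    LinearMap.continuous_of_finiteDimensional (hF.kroneckerAlgHom (m := m)).toLinearMap
  refine (NormedSpace.map_exp _ hcont B).symm.trans (Finset.sum_congr rfl fun i _ => ?_)
  exact congrArg (F i ⊗ₖ ·) (NormedSpace.map_exp (Pi.evalRingHom _ i) (continuous_apply i) B)

theorem U_sum_kronecker {F : ι → Matrix n n ℂ} (hF : CompleteOrthogonalIdempotents F)
    (M : ι → Matrix m m ℂ) (t : ℝ) : U (∑ i, F i ⊗ₖ M i) t = ∑ i, F i ⊗ₖ U (M i) t := by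
  simp only [U, Finset.smul_sum, ← kronecker_smul, hF.exp_sum_kronecker]

theorem vecKron_eq_of_sum_kronecker_mulVec {F : ι → Matrix n n ℂ}
    (hF : CompleteOrthogonalIdempotents F) {W : ι → Matrix m m ℂ} {u v : n → ℂ} {x y : m → ℂ}
    (h : (∑ j, F j ⊗ₖ W j) *ᵥ vecKron u x = vecKron v y) (i : ι) :
    vecKron (F i *ᵥ u) (W i *ᵥ x) = vecKron (F i *ᵥ v) y := by
  have := congrArg ((F i ⊗ₖ (1 : Matrix m m ℂ)) *ᵥ ·) h
  simpa only [mulVec_mulVec, hF.kronecker_one_mul_sum_kronecker, kronecker_mulVec_vecKron,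
    one_mulVec] using this

end CompleteOrthogonalIdempotents

theorem U_smul_one_sub_smul {V : Type*} [Fintype V] [DecidableEq V] (c s t : ℝ)
    (A : Matrix V V ℂ) :
    U ((c : ℂ) • 1 - (s : ℂ) • A) t = cexp (↑(-(c * t)) * I) • U A (-s * t) := by
  have hsplit : (-(I * t)) • ((c : ℂ) • (1 : Matrix V V ℂ) - (s : ℂ) • A)
      = algebraMap ℂ _ (↑(-(c * t)) * I) + (-(I * ↑(-s * t))) • A := by
    rw [Algebra.algebraMap_eq_smul_one, smul_sub, smul_smul, smul_smul, sub_eq_add_neg,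
      ← neg_smul]
    push_cast
    ring_nf
  rw [U, U, hsplit, Matrix.exp_add_of_commute _ _ (Algebra.commute_algebraMap_left _ _),
    algebraMap_eq_diagonal, exp_diagonal, Pi.exp_def, ← Complex.exp_eq_exp_ℂ]
  simp only [Pi.algebraMap_apply, Algebra.algebraMap_self, RingHom.id_apply]
  exact (smul_eq_diagonal_mul _ _).symm

theorem SimpleGraph.IsRegularOfDegree.adjMatrix_eq_sum_smul {V ι R : Type*} [Fintype V]
    [DecidableEq V] [Fintype ι] [Ring R] {G : SimpleGraph V} [DecidableRel G.Adj] {r : ℕ}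
    (hG : G.IsRegularOfDegree r) {θ : ι → R} {F : ι → Matrix V V R} (hsum : ∑ i, F i = 1)
    (hspec : G.lapMatrix R = ∑ i, θ i • F i) :
    G.adjMatrix R = ∑ i, ((r : R) - θ i) • F i := by
  have hdeg : G.degMatrix R = (r : R) • 1 := by
    rw [SimpleGraph.degMatrix, funext fun v => congrArg (Nat.cast (R := R)) (hG v),
      ← smul_one_eq_diagonal]
  have hadj : G.adjMatrix R = (r : R) • 1 - G.lapMatrix R := by
    rw [SimpleGraph.lapMatrix, hdeg, sub_sub_cancel]
  simp_rw [hadj, hspec, sub_smul, Finset.sum_sub_distrib, ← Finset.smul_sum, hsum]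

theorem stmt8_general {n m r₁ r₂ : ℕ} (G : SimpleGraph (Fin n)) [DecidableRel G.Adj]
    (H : SimpleGraph (Fin m)) [DecidableRel H.Adj]
    (hG : G.IsRegularOfDegree r₁)
    {ι : Type*} [Fintype ι] [DecidableEq ι]
    (θ : ι → ℝ) (F : ι → Matrix (Fin n) (Fin n) ℂ)
    (hsum : ∑ i, F i = 1)
    (horth : ∀ i j, F i * F j = if i = j then F i else 0)
    (hspec : G.lapMatrix ℂ = ∑ i, ((θ i : ℝ) : ℂ) • F i)
    (a b c d : Fin n) (w z : Fin m)
    -- Laplacian strong cospectrality in G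
    (hsc : ∀ i, F i *ᵥ (e a - e b) = F i *ᵥ (e c - e d) ∨
                F i *ᵥ (e a - e b) = -(F i *ᵥ (e c - e d)))
    -- Laplacian perfect pair state transfer in G × H at time t
    (t : ℝ) (χ : ℂ) (hχ : ‖χ‖ = 1)
    (hpst : (U (((r₁ * r₂ : ℕ) : ℂ) • (1 : Matrix (Fin n × Fin m) (Fin n × Fin m) ℂ)
          - (G.adjMatrix ℂ) ⊗ₖ (H.adjMatrix ℂ)) t) *ᵥ vecKron (e a - e b) (e w)
        = χ • vecKron (e c - e d) (e z)) :
    ∀ i, F i *ᵥ (e a - e b) ≠ 0 →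
      ∃ lam : ℂ, ‖lam‖ = 1 ∧
        (U (H.adjMatrix ℂ) ((θ i - (r₁ : ℝ)) * t)) *ᵥ e w = lam • (e z : Fin m → ℂ) := by
  intro i hi
  have hF : CompleteOrthogonalIdempotents F :=
    ⟨⟨fun j => (horth j j).trans (if_pos rfl),
      fun j k hjk => (horth j k).trans (if_neg hjk)⟩, hsum⟩
  have hA : G.adjMatrix ℂ = ∑ j, ((r₁ - θ j : ℝ) : ℂ) • F j := by
    simpa using hG.adjMatrix_eq_sum_smul hsum hspec
  rw [← Complex.ofReal_natCast, smul_one_sub_kronecker_eq_sum hsum hA, hF.U_sum_kronecker,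
    ← vecKron_smul] at hpst
  have hproj := hF.vecKron_eq_of_sum_kronecker_mulVec hpst i
  obtain ⟨σ, hσ, hcd⟩ : ∃ σ : ℂ, ‖σ‖ = 1 ∧ F i *ᵥ (e c - e d) = σ • F i *ᵥ (e a - e b) := by
    rcases hsc i with h | h
    · exact ⟨1, norm_one, by rw [h, one_smul]⟩
    · exact ⟨-1, by simp, by rw [h, neg_one_smul, neg_neg]⟩
  rw [hcd, smul_vecKron, ← vecKron_smul] at hproj
  have hUw := vecKron_right_injective hi hproj
  rw [U_smul_one_sub_smul, smul_mulVec, neg_sub, smul_smul] at hUw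
  set κ := cexp (↑(-((r₁ * r₂ : ℕ) * t : ℝ)) * I)
  have hκ : ‖κ‖ = 1 := norm_exp_ofReal_mul_I _
  refine ⟨κ⁻¹ * (σ * χ), by simp [hκ, hσ, hχ], ?_⟩
  rw [mul_smul, ← hUw, smul_smul, inv_mul_cancel₀ (Complex.exp_ne_zero _), one_smul]

theorem stmt8 {n m r₁ r₂ : ℕ} (G : SimpleGraph (Fin n)) [DecidableRel G.Adj]
    (H : SimpleGraph (Fin m)) [DecidableRel H.Adj]
    (hG : G.IsRegularOfDegree r₁) (hH : H.IsRegularOfDegree r₂)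
    {ι : Type*} [Fintype ι] [DecidableEq ι]
    (θ : ι → ℝ) (F : ι → Matrix (Fin n) (Fin n) ℂ)
    (hsum : ∑ i, F i = 1)
    (horth : ∀ i j, F i * F j = if i = j then F i else 0)
    (hspec : G.lapMatrix ℂ = ∑ i, ((θ i : ℝ) : ℂ) • F i)
    (a b c d : Fin n) (w z : Fin m) (hab : a ≠ b) (hcd : c ≠ d)
    -- Laplacian strong cospectrality in G
    (hsc : ∀ i, F i *ᵥ (e a - e b) = F i *ᵥ (e c - e d) ∨
                F i *ᵥ (e a - e b) = -(F i *ᵥ (e c - e d)))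
    -- Laplacian perfect pair state transfer in G × H at time t
    (t : ℝ) (χ : ℂ) (hχ : ‖χ‖ = 1)
    (hpst : (U (((r₁ * r₂ : ℕ) : ℂ) • (1 : Matrix (Fin n × Fin m) (Fin n × Fin m) ℂ)
          - (G.adjMatrix ℂ) ⊗ₖ (H.adjMatrix ℂ)) t) *ᵥ vecKron (e a - e b) (e w)
        = χ • vecKron (e c - e d) (e z)) :
    ∀ i, F i *ᵥ (e a - e b) ≠ 0 →
      ∃ lam : ℂ, ‖lam‖ = 1 ∧
        (U (H.adjMatrix ℂ) ((θ i - (r₁ : ℝ)) * t)) *ᵥ e w = lam • (e z : Fin m → ℂ) :=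
  stmt8_general G H hG θ F hsum horth hspec a b c d w z hsc t χ hχ hpst
end

section
/- Let G be r₁-regular and H be r₂-regular on the same n-vertex set. The double cover G ⋉ H has Laplacian perfect pair state transfer between e_0 ⊗ (e_a − e_b) and e_1 ⊗ (e_a − e_b) at time τ if and only if there exists a unit complex number χ such that U_{A_G+A_H}(τ)(e_a − e_b) = χ(e_a − e_b) and U_{A_G−A_H}(τ)(e_a − e_b) = −χ(e_a − e_b). -/
/-!
With `S = [[A, B], [B, A]]` the Laplacian is `(r₁ + r₂) I - S`, so `U_L(τ) = e^{-iτ(r₁+r₂)} U_S(-τ)`.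
The block columns `[1; 1]` and `[1; -1]` intertwine `S` with `A + B` and `A - B`, which gives
`U_S = ½ [[U₊ + U₋, U₊ - U₋], [U₊ - U₋, U₊ + U₋]]`; hence the transfer amplitude is a unit phase
times `¼ conj(⟪u, U₊(τ) u⟫ - ⟪u, U₋(τ) u⟫)` for `u = e_a - e_b`. As `U₊(τ)`, `U₋(τ)` are unitary,
`|⟪u, U₊ u⟫ - ⟪u, U₋ u⟫| ≤ 2‖u‖² = 4`. Equality forces `‖U₊ u - U₋ u‖ = 2‖u‖`, hence
`U₋ u = -U₊ u` by the parallelogram law, and then `U₊ u = χ u` by the equality case of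
Cauchy–Schwarz.
-/

open Matrix Complex Kronecker

open NormedSpace

theorem norm_inner_sub_inner_eq_iff {𝕜 E : Type*} [RCLike 𝕜] [NormedAddCommGroup E]
    [InnerProductSpace 𝕜 E] {u v w : E} (hv : ‖v‖ ≤ ‖u‖) (hw : ‖w‖ ≤ ‖u‖) :
    ‖inner 𝕜 u v - inner 𝕜 u w‖ = 2 * ‖u‖ ^ 2 ↔ ∃ χ : 𝕜, ‖χ‖ = 1 ∧ v = χ • u ∧ w = -χ • u := by
  constructor
  · intro h
    rcases eq_or_ne u 0 with rfl | hu
    · exact ⟨1, by simp, by simpa using hv, by simpa using hw⟩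
    have hu₀ : 0 < ‖u‖ := norm_pos_iff.2 hu
    rw [← inner_sub_right] at h
    have hcs := norm_inner_le_norm (𝕜 := 𝕜) u (v - w)
    have htri := norm_sub_le v w
    have hvu : ‖v‖ = ‖u‖ := by nlinarith
    have hwu : ‖w‖ = ‖u‖ := by nlinarith
    have hvw : ‖v - w‖ = 2 * ‖u‖ := by nlinarith
    have hwv : w = -v := by
      have hpar := parallelogram_law_with_norm 𝕜 v w
      rw [hvu, hwu, hvw] at hpar
      have : ‖v + w‖ = 0 := by nlinarith [norm_nonneg (v + w)]
      exact (neg_eq_of_add_eq_zero_right (norm_eq_zero.1 this)).symm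
    subst hwv
    have hcs_eq : ‖inner 𝕜 u v‖ = ‖u‖ * ‖v‖ := by
      rw [sub_neg_eq_add, inner_add_right, ← two_mul, norm_mul, RCLike.norm_two] at h
      rw [hvu]; linarith
    obtain ⟨χ, -, rfl⟩ := (norm_inner_eq_norm_iff hu (norm_pos_iff.1 (hvu ▸ hu₀))).1 hcs_eq
    refine ⟨χ, ?_, rfl, (neg_smul χ u).symm⟩
    rw [norm_smul] at hvu
    exact (mul_eq_right₀ hu₀.ne').1 hvu
  · rintro ⟨χ, hχ, rfl, rfl⟩
    rw [inner_smul_right, inner_smul_right, inner_self_eq_norm_sq_to_K, ← sub_mul, sub_neg_eq_add,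
      ← two_mul, norm_mul, norm_mul, hχ, RCLike.norm_two, norm_pow, RCLike.norm_ofReal, abs_norm]
    ring

section
attribute [local instance] Matrix.linftyOpNormedRing Matrix.linftyOpNormedAlgebra

theorem Matrix.exp_mul_eq_mul_exp_of_mul_eq {m n : Type*} [Fintype m] [DecidableEq m]
    [Fintype n] [DecidableEq n] {M : Matrix m m ℂ} {N : Matrix n n ℂ} {J : Matrix m n ℂ}
    (h : M * J = J * N) : exp M * J = J * exp N := by
  have hpow (k : ℕ) : M ^ k * J = J * N ^ k := by
    induction k with
    | zero => simp
    | succ k ih => rw [pow_succ, pow_succ, Matrix.mul_assoc, h, ← Matrix.mul_assoc, ih,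
        Matrix.mul_assoc]
  have hM : HasSum (fun k => ((k.factorial : ℂ)⁻¹ • M ^ k) * J) (exp M * J) :=
    (exp_series_hasSum_exp' M).map (mulRightLinearMap m ℂ J)
      (continuous_id.matrix_mul continuous_const)
  have hN : HasSum (fun k => J * ((k.factorial : ℂ)⁻¹ • N ^ k)) (J * exp N) :=
    (exp_series_hasSum_exp' N).map (mulLeftLinearMap n ℂ J)
      (continuous_const.matrix_mul continuous_id)
  exact hM.unique (by simpa only [Matrix.smul_mul, Matrix.mul_smul, hpow] using hN)

end

theorem Matrix.exp_smul_one {m : Type*} [Fintype m] [DecidableEq m] (w : ℂ) :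
    exp (w • (1 : Matrix m m ℂ)) = Complex.exp w • 1 := by
  rw [smul_one_eq_diagonal, exp_diagonal, Pi.exp_def, ← Complex.exp_eq_exp_ℂ,
    ← smul_one_eq_diagonal]

theorem U_neg_eq_conjTranspose {m : Type*} [Fintype m] [DecidableEq m] {M : Matrix m m ℂ}
    (hM : M.IsHermitian) (t : ℝ) : U M (-t) = (U M t)ᴴ := by
  rw [U, U, ← exp_conjTranspose, conjTranspose_smul, hM.eq]
  simp

theorem U_mem_unitary {m : Type*} [Fintype m] [DecidableEq m] {M : Matrix m m ℂ}
    (hM : M.IsHermitian) (t : ℝ) : U M t ∈ unitary (Matrix m m ℂ) := by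
  have : (U M t)ᴴ = (U M t)⁻¹ := by
    rw [← U_neg_eq_conjTranspose hM, U, U, ← Matrix.exp_neg]
    simp
  rw [Unitary.mem_iff, star_eq_conjTranspose, this]
  have hdet : IsUnit (U M t).det := (Matrix.isUnit_exp _).map detMonoidHom
  exact ⟨nonsing_inv_mul _ hdet, mul_nonsing_inv _ hdet⟩

theorem U_smul_one_sub {m : Type*} [Fintype m] [DecidableEq m] (c : ℂ) (M : Matrix m m ℂ)
    (t : ℝ) : U (c • 1 - M) t = Complex.exp (-(I * t * c)) • U M (-t) := by
  have hsplit : (-(I * t)) • (c • 1 - M) = (-(I * t * c)) • (1 : Matrix m m ℂ) +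
      (-(I * ((-t : ℝ) : ℂ))) • M := by
    rw [smul_sub, smul_smul, ofReal_neg]
    simp [sub_eq_add_neg, mul_neg, neg_smul]
  rw [U, U, hsplit, Matrix.exp_add_of_commute _ _ ((Commute.one_left _).smul_left _),
    exp_smul_one, smul_mul_assoc, Matrix.one_mul]

theorem U_mul_eq_mul_U_of_mul_eq {m n : Type*} [Fintype m] [DecidableEq m]
    [Fintype n] [DecidableEq n] {M : Matrix m m ℂ} {N : Matrix n n ℂ} {J : Matrix m n ℂ}
    (h : M * J = J * N) (t : ℝ) : U M t * J = J * U N t :=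
  exp_mul_eq_mul_exp_of_mul_eq (by rw [Matrix.smul_mul, Matrix.mul_smul, h])

theorem U_fromBlocks {m : Type*} [Fintype m] [DecidableEq m] (A B : Matrix m m ℂ) (t : ℝ) :
    U (fromBlocks A B B A) t = (1 / 2 : ℂ) •
      fromBlocks (U (A + B) t + U (A - B) t) (U (A + B) t - U (A - B) t)
        (U (A + B) t - U (A - B) t) (U (A + B) t + U (A - B) t) := by
  set Jp : Matrix (m ⊕ m) m ℂ := fromRows 1 1
  set Jm : Matrix (m ⊕ m) m ℂ := fromRows 1 (-1)
  have hsum : U (fromBlocks A B B A) t * Jp = Jp * U (A + B) t :=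
    U_mul_eq_mul_U_of_mul_eq (by simp [Jp, fromBlocks_mul_fromRows, fromRows_mul, add_comm]) t
  have hdiff : U (fromBlocks A B B A) t * Jm = Jm * U (A - B) t :=
    U_mul_eq_mul_U_of_mul_eq
      (by simp [Jm, fromBlocks_mul_fromRows, fromRows_mul, sub_eq_add_neg]) t
  have hone : (1 : Matrix (m ⊕ m) (m ⊕ m) ℂ) = (1 / 2 : ℂ) • (Jp * Jpᵀ + Jm * Jmᵀ) := by
    simp only [Jp, Jm, transpose_fromRows, fromRows_mul_fromCols, fromBlocks_add, fromBlocks_smul,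
      ← fromBlocks_one]
    simp only [transpose_one, transpose_neg, Matrix.mul_one, Matrix.mul_neg, neg_neg,
      ← two_smul ℂ (1 : Matrix m m ℂ), smul_smul]
    norm_num
  rw [← Matrix.mul_one (U _ t), hone, Matrix.mul_smul, Matrix.mul_add, ← Matrix.mul_assoc,
    ← Matrix.mul_assoc, hsum, hdiff]
  simp only [Jp, Jm, transpose_fromRows, transpose_one, transpose_neg, fromRows_mul,
    mul_fromCols, Matrix.one_mul, Matrix.mul_one, Matrix.mul_neg, Matrix.neg_mul,
    fromRows_neg, neg_neg, fromCols_fromRows_eq_fromBlocks, fromBlocks_add, sub_eq_add_neg]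

theorem Matrix.norm_toLp_mulVec_of_mem_unitary {m : Type*} [Fintype m] [DecidableEq m]
    {P : Matrix m m ℂ} (hP : P ∈ unitary (Matrix m m ℂ)) (x : m → ℂ) :
    ‖WithLp.toLp 2 (P *ᵥ x)‖ = ‖WithLp.toLp 2 x‖ := by
  have hinner : inner ℂ (WithLp.toLp 2 (P *ᵥ x)) (WithLp.toLp 2 (P *ᵥ x)) =
      inner ℂ (WithLp.toLp 2 x) (WithLp.toLp 2 x) := by
    rw [EuclideanSpace.inner_toLp_toLp, EuclideanSpace.inner_toLp_toLp, star_mulVec,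
      dotProduct_comm, dotProduct_mulVec, vecMul_vecMul, ← star_eq_conjTranspose,
      Unitary.star_mul_self_of_mem hP, vecMul_one, dotProduct_comm]
  rw [inner_self_eq_norm_sq_to_K, inner_self_eq_norm_sq_to_K] at hinner
  exact (sq_eq_sq₀ (norm_nonneg _) (norm_nonneg _)).1 (by exact_mod_cast hinner)

theorem Matrix.norm_dotProduct_sub_eq_iff_of_mem_unitary {m : Type*} [Fintype m] [DecidableEq m]
    {P Q : Matrix m m ℂ} (hP : P ∈ unitary (Matrix m m ℂ)) (hQ : Q ∈ unitary (Matrix m m ℂ))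
    (u : m → ℂ) :
    ‖star u ⬝ᵥ (P *ᵥ u) - star u ⬝ᵥ (Q *ᵥ u)‖ = 2 * ‖WithLp.toLp 2 u‖ ^ 2 ↔
      ∃ χ : ℂ, ‖χ‖ = 1 ∧ P *ᵥ u = χ • u ∧ Q *ᵥ u = -χ • u := by
  have key := norm_inner_sub_inner_eq_iff (𝕜 := ℂ)
    (norm_toLp_mulVec_of_mem_unitary hP u).le (norm_toLp_mulVec_of_mem_unitary hQ u).le
  simpa only [EuclideanSpace.inner_toLp_toLp, dotProduct_comm _ (star u), ← WithLp.toLp_smul,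
    (WithLp.toLp_injective 2).eq_iff] using key

theorem Matrix.star_dotProduct_conjTranspose_mulVec {m : Type*} [Fintype m] (M : Matrix m m ℂ)
    (v w : m → ℂ) : star v ⬝ᵥ (Mᴴ *ᵥ w) = star (star w ⬝ᵥ (M *ᵥ v)) := by
  rw [star_dotProduct, star_mulVec, conjTranspose_conjTranspose, dotProduct_mulVec]

theorem dotProduct_U_smul_one_sub_fromBlocks_mulVec {m : Type*} [Fintype m] [DecidableEq m]
    (c : ℂ) (A B : Matrix m m ℂ) (t : ℝ) (u v : m → ℂ) :
    Sum.elim 0 v ⬝ᵥ (U (c • 1 - fromBlocks A B B A) t *ᵥ Sum.elim u 0) =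
      Complex.exp (-(I * t * c)) *
        ((1 / 2) * (v ⬝ᵥ (U (A + B) (-t) *ᵥ u) - v ⬝ᵥ (U (A - B) (-t) *ᵥ u))) := by
  rw [U_smul_one_sub, U_fromBlocks, smul_mulVec, smul_mulVec, fromBlocks_mulVec]
  simp [sumElim_dotProduct_sumElim, sub_mulVec, dotProduct_sub]

theorem stmt16_general {n r₁ r₂ : ℕ} (G H : SimpleGraph (Fin n))
    [DecidableRel G.Adj] [DecidableRel H.Adj]
    (τ : ℝ) (a b : Fin n) (hab : a ≠ b) :
    ‖(1 / 2 : ℂ) *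
        (Sum.elim (0 : Fin n → ℂ) (e a - e b) ⬝ᵥ
          ((U (((r₁ + r₂ : ℕ) : ℂ) • (1 : Matrix (Fin n ⊕ Fin n) (Fin n ⊕ Fin n) ℂ)
                - Matrix.fromBlocks (G.adjMatrix ℂ) (H.adjMatrix ℂ)
                    (H.adjMatrix ℂ) (G.adjMatrix ℂ)) τ) *ᵥ
            Sum.elim ((e a - e b : Fin n → ℂ)) (0 : Fin n → ℂ)))‖ ^ 2 = 1
      ↔ ∃ χ : ℂ, ‖χ‖ = 1 ∧
          (U (G.adjMatrix ℂ + H.adjMatrix ℂ) τ) *ᵥ (e a - e b) = χ • (e a - e b) ∧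
          (U (G.adjMatrix ℂ - H.adjMatrix ℂ) τ) *ᵥ (e a - e b) = (-χ) • (e a - e b) := by
  have hG := G.isHermitian_adjMatrix ℂ
  have hH := H.isHermitian_adjMatrix ℂ
  have hstar : star (e a - e b) = e a - e b := by simp [e]
  have hnorm : ‖WithLp.toLp 2 (e a - e b)‖ ^ 2 = 2 := by
    rw [← RCLike.ofReal_inj (K := ℂ), RCLike.ofReal_pow, ← inner_self_eq_norm_sq_to_K,
      EuclideanSpace.inner_toLp_toLp, hstar]
    simp [e, dotProduct_sub, hab, hab.symm, one_add_one_eq_two]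
  have hconj (M : Matrix (Fin n) (Fin n) ℂ) :
      (e a - e b) ⬝ᵥ (Mᴴ *ᵥ (e a - e b)) = star ((e a - e b) ⬝ᵥ (M *ᵥ (e a - e b))) := by
    simpa only [hstar] using star_dotProduct_conjTranspose_mulVec M (e a - e b) (e a - e b)
  have hphase : ‖Complex.exp (-(I * τ * ((r₁ + r₂ : ℕ) : ℂ)))‖ = 1 := by
    rw [Complex.norm_exp]; simp
  have key := norm_dotProduct_sub_eq_iff_of_mem_unitary (U_mem_unitary (hG.add hH) τ)
    (U_mem_unitary (hG.sub hH) τ) (e a - e b)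
  rw [hstar, hnorm] at key
  rw [dotProduct_U_smul_one_sub_fromBlocks_mulVec, U_neg_eq_conjTranspose (hG.add hH),
    U_neg_eq_conjTranspose (hG.sub hH), hconj, hconj, ← star_sub, ← key, norm_mul, norm_mul,
    norm_mul, norm_star, hphase, show ‖(1 / 2 : ℂ)‖ = 1 / 2 by norm_num,
    pow_eq_one_iff_of_nonneg (by positivity) two_ne_zero]
  constructor <;> intro h <;> linarith

theorem stmt16 {n r₁ r₂ : ℕ} (G H : SimpleGraph (Fin n))
    [DecidableRel G.Adj] [DecidableRel H.Adj]
    (hG : G.IsRegularOfDegree r₁) (hH : H.IsRegularOfDegree r₂)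
    (τ : ℝ) (a b : Fin n) (hab : a ≠ b) :
    ‖(1 / 2 : ℂ) *
        (Sum.elim (0 : Fin n → ℂ) (e a - e b) ⬝ᵥ
          ((U (((r₁ + r₂ : ℕ) : ℂ) • (1 : Matrix (Fin n ⊕ Fin n) (Fin n ⊕ Fin n) ℂ)
                - Matrix.fromBlocks (G.adjMatrix ℂ) (H.adjMatrix ℂ)
                    (H.adjMatrix ℂ) (G.adjMatrix ℂ)) τ) *ᵥ
            Sum.elim ((e a - e b : Fin n → ℂ)) (0 : Fin n → ℂ)))‖ ^ 2 = 1
      ↔ ∃ χ : ℂ, ‖χ‖ = 1 ∧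
          (U (G.adjMatrix ℂ + H.adjMatrix ℂ) τ) *ᵥ (e a - e b) = χ • (e a - e b) ∧
          (U (G.adjMatrix ℂ - H.adjMatrix ℂ) τ) *ᵥ (e a - e b) = (-χ) • (e a - e b) :=
  stmt16_general G H τ a b hab
end

section
/- For any n ≥ 2 and distinct vertices a, b of K_n: (1) U_{A_{K_n}}(π/2)(e_a − e_b) = i(e_a − e_b), i.e., the pair state e_a − e_b is periodic with respect to A_{K_n} at time π/2 with phase i; and (2) the double cover K_n ⋉ K_n (adjacency matrix [[A_{K_n}, A_{K_n}],[A_{K_n}, A_{K_n}]]) has Laplacian perfect pair state transfer between e_0 ⊗ (e_a − e_b) and e_1 ⊗ (e_a − e_b) at time π/2. -/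
/-!
A pair state `v = e a - e b` has coordinate sum zero, so it is an eigenvector of
`A = J - I` with eigenvalue `-1`, and `exp (-i t A)` acts on it by the phase `exp (i t)`.
On the double cover write `(v, 0) = ((v, v) + (v, -v)) / 2`: these are eigenvectors of the
Laplacian with eigenvalues `c + 2` and `c`, where `c = 2n - 2`. At `t = π / 2` their phases
differ by `exp (-i π) = -1`, so the two halves cancel in the first block and add up in the second.
-/

open Matrix Complex Kronecker

theorem Matrix.exp_mulVec_of_mulVec_eq_smul {V : Type*} [Fintype V] [DecidableEq V]
    {M : Matrix V V ℂ} {μ : ℂ} {v : V → ℂ} (h : M *ᵥ v = μ • v) :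
    NormedSpace.exp M *ᵥ v = Complex.exp μ • v := by
  let _ : NormedRing (Matrix V V ℂ) := Matrix.linftyOpNormedRing
  let _ : NormedAlgebra ℂ (Matrix V V ℂ) := Matrix.linftyOpNormedAlgebra
  have hpow (k : ℕ) : (M ^ k) *ᵥ v = μ ^ k • v := by
    induction k with
    | zero => simp
    | succ k ih => rw [pow_succ', ← mulVec_mulVec, ih, mulVec_smul, h, smul_smul, ← pow_succ]
  have hM := (NormedSpace.exp_series_hasSum_exp' (𝕂 := ℂ) M).map
    (mulVec.addMonoidHomLeft v) (continuous_id.matrix_mulVec continuous_const)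
  have hμ := (NormedSpace.exp_series_hasSum_exp' (𝕂 := ℂ) μ).smul_const v
  rw [← Complex.exp_eq_exp_ℂ] at hμ
  refine hM.unique ?_
  simpa [Function.comp_def, mulVec.addMonoidHomLeft, smul_mulVec, hpow, smul_smul] using hμ

theorem U_mulVec_of_mulVec_eq_smul {V : Type*} [Fintype V] [DecidableEq V]
    {M : Matrix V V ℂ} {μ : ℂ} {v : V → ℂ} (h : M *ᵥ v = μ • v) (t : ℝ) :
    U M t *ᵥ v = Complex.exp (-(Complex.I * t) * μ) • v :=
  Matrix.exp_mulVec_of_mulVec_eq_smul (by rw [smul_mulVec, h, smul_smul])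

theorem SimpleGraph.adjMatrix_top_mulVec {V α : Type*} [Fintype V] [DecidableEq V] [Ring α]
    (vec : V → α) : (⊤ : SimpleGraph V).adjMatrix α *ᵥ vec = fun v ↦ ∑ u, vec u - vec v := by
  ext v
  rw [adjMatrix_mulVec_apply, neighborFinset_top, eq_sub_iff_add_eq,
    ← Finset.sum_singleton vec v, Finset.sum_compl_add_sum]

theorem SimpleGraph.adjMatrix_top_mulVec_of_sum_eq_zero {V α : Type*} [Fintype V] [DecidableEq V]
    [Ring α] {vec : V → α} (h : ∑ u, vec u = 0) :
    (⊤ : SimpleGraph V).adjMatrix α *ᵥ vec = (-1 : α) • vec := by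
  rw [adjMatrix_top_mulVec, h]
  ext v
  simp

theorem Matrix.fromBlocks_self_mulVec_elim {V α : Type*} [Fintype V] [Ring α]
    (M : Matrix V V α) (v w : V → α) :
    fromBlocks M M M M *ᵥ Sum.elim v w = Sum.elim (M *ᵥ (v + w)) (M *ᵥ (v + w)) := by
  simp [fromBlocks_mulVec, mulVec_add]

theorem U_sub_fromBlocks_self_mulVec_elim_zero {V : Type*} [Fintype V] [DecidableEq V]
    {M : Matrix V V ℂ} {μ : ℂ} {v : V → ℂ} (h : M *ᵥ v = μ • v) (c : ℂ) {t : ℝ}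
    (ht : Complex.exp (2 * Complex.I * t * μ) = -1) :
    U (c • 1 - fromBlocks M M M M) t *ᵥ Sum.elim v (0 : V → ℂ)
      = -Complex.exp (-(Complex.I * t) * c) • Sum.elim (0 : V → ℂ) v := by
  have hsym : (c • 1 - fromBlocks M M M M) *ᵥ Sum.elim v v = (c - 2 * μ) • Sum.elim v v := by
    rw [sub_mulVec, smul_mulVec, one_mulVec, fromBlocks_self_mulVec_elim, mulVec_add, h]
    ext (i | i) <;> simp <;> ring
  have hanti : (c • 1 - fromBlocks M M M M) *ᵥ Sum.elim v (-v) = c • Sum.elim v (-v) := by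
    simp [sub_mulVec, smul_mulVec, fromBlocks_self_mulVec_elim]
  have hsplit : Sum.elim v (0 : V → ℂ) = (2⁻¹ : ℂ) • (Sum.elim v v + Sum.elim v (-v)) := by
    ext (i | i)
    · simp only [Sum.elim_inl, Pi.smul_apply, Pi.add_apply, smul_eq_mul]
      ring
    · simp
  have hphase :
      Complex.exp (-(Complex.I * t) * (c - 2 * μ)) = -Complex.exp (-(Complex.I * t) * c) := by
    rw [show -(Complex.I * t) * (c - 2 * μ) = -(Complex.I * t) * c + 2 * Complex.I * t * μ by ring,
      Complex.exp_add, ht, mul_neg_one]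
  rw [hsplit, mulVec_smul, mulVec_add, U_mulVec_of_mulVec_eq_smul hsym,
    U_mulVec_of_mulVec_eq_smul hanti, hphase]
  ext (i | i)
  · simp
  · simp only [Sum.elim_inr, Pi.smul_apply, Pi.add_apply, Pi.neg_apply, smul_eq_mul]
    ring

theorem stmt19_general (n : ℕ) (a b : Fin n) :
    (U ((⊤ : SimpleGraph (Fin n)).adjMatrix ℂ) (Real.pi / 2)) *ᵥ (e a - e b)
        = Complex.I • (e a - e b)
    ∧ ∃ χ : ℂ, ‖χ‖ = 1 ∧
        (U (((2 * n - 2 : ℕ) : ℂ) • (1 : Matrix (Fin n ⊕ Fin n) (Fin n ⊕ Fin n) ℂ)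
              - Matrix.fromBlocks ((⊤ : SimpleGraph (Fin n)).adjMatrix ℂ)
                  ((⊤ : SimpleGraph (Fin n)).adjMatrix ℂ)
                  ((⊤ : SimpleGraph (Fin n)).adjMatrix ℂ)
                  ((⊤ : SimpleGraph (Fin n)).adjMatrix ℂ)) (Real.pi / 2)) *ᵥ
            Sum.elim ((e a - e b : Fin n → ℂ)) (0 : Fin n → ℂ)
          = χ • Sum.elim (0 : Fin n → ℂ) ((e a - e b : Fin n → ℂ)) := by
  have hA : (⊤ : SimpleGraph (Fin n)).adjMatrix ℂ *ᵥ (e a - e b) = (-1 : ℂ) • (e a - e b) :=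
    SimpleGraph.adjMatrix_top_mulVec_of_sum_eq_zero (by simp [e, Finset.sum_sub_distrib])
  refine ⟨?_, _, ?_, U_sub_fromBlocks_self_mulVec_elim_zero hA _ ?_⟩
  · rw [U_mulVec_of_mulVec_eq_smul hA]
    congr 1
    convert Complex.exp_pi_div_two_mul_I using 2
    push_cast
    ring
  · rw [norm_neg, Complex.norm_exp]
    simp
  · convert Complex.exp_neg_pi_mul_I using 2
    push_cast
    ring

theorem stmt19 (n : ℕ) (hn : 2 ≤ n) (a b : Fin n) (hab : a ≠ b) :
    (U ((⊤ : SimpleGraph (Fin n)).adjMatrix ℂ) (Real.pi / 2)) *ᵥ (e a - e b)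
        = Complex.I • (e a - e b)
    ∧ ∃ χ : ℂ, ‖χ‖ = 1 ∧
        (U (((2 * n - 2 : ℕ) : ℂ) • (1 : Matrix (Fin n ⊕ Fin n) (Fin n ⊕ Fin n) ℂ)
              - Matrix.fromBlocks ((⊤ : SimpleGraph (Fin n)).adjMatrix ℂ)
                  ((⊤ : SimpleGraph (Fin n)).adjMatrix ℂ)
                  ((⊤ : SimpleGraph (Fin n)).adjMatrix ℂ)
                  ((⊤ : SimpleGraph (Fin n)).adjMatrix ℂ)) (Real.pi / 2)) *ᵥ
            Sum.elim ((e a - e b : Fin n → ℂ)) (0 : Fin n → ℂ)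
          = χ • Sum.elim (0 : Fin n → ℂ) ((e a - e b : Fin n → ℂ)) :=
  stmt19_general n a b
end
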